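/- Let p > 2 be a real number, let u ∈ (0,1), and let a > 0 and α > 0 be real numbers. Then the inequality (1+u)^{p−1}·(1−u^{p−1}) / (a + α·(1+u)^p/(1+u^p))^{1−1/p} > (1−u)^{p−1}·(1+u^{p−1}) / (a + α·(1−u)^p/(1+u^p))^{1−1/p} holds if and only if a > α·f(u). -/

import Mathlib

/-!
Write `A = (1+u)^(p-1) (1-u^(p-1))`, `B = (1-u)^(p-1) (1+u^(p-1))` and let `X`, `Y` be the two
bases raised to `1 - 1/p`. Raising `B X^(1-1/p) < A Y^(1-1/p)` to the conjugate exponent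
`p/(p-1)` turns it into `B^(p/(p-1)) X < A^(p/(p-1)) Y`, which is affine in `a` and `α`.
Since `A > B`, the coefficient of `a` is positive, and solving for `a` gives `a > α f(u)`.
-/

/-- The function f from Lemma 1 of the paper. -/
noncomputable def f (p u : ℝ) : ℝ :=
  (1 - u ^ (2:ℝ)) ^ p / (1 + u ^ p) *
    ((1 + u ^ (p - 1)) ^ (p / (p - 1)) - (1 - u ^ (p - 1)) ^ (p / (p - 1))) /
    ((1 + u) ^ p * (1 - u ^ (p - 1)) ^ (p / (p - 1)) -
      (1 - u) ^ p * (1 + u ^ (p - 1)) ^ (p / (p - 1)))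

open Real

theorem mul_rpow_lt_mul_rpow_iff {a b x y e : ℝ} (ha : 0 ≤ a) (hb : 0 ≤ b) (hx : 0 ≤ x)
    (hy : 0 ≤ y) (he : 0 < e) :
    a * x ^ e < b * y ^ e ↔ a ^ e⁻¹ * x < b ^ e⁻¹ * y := by
  rw [← rpow_lt_rpow_iff (by positivity) (by positivity) (inv_pos.2 he),
    mul_rpow ha (by positivity), mul_rpow hb (by positivity),
    rpow_rpow_inv hx he.ne', rpow_rpow_inv hy he.ne']

theorem rpow_sub_one_mul_rpow_div_sub_one {x y p : ℝ} (hx : 0 ≤ x) (hy : 0 ≤ y) (hp : 1 < p) :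
    (x ^ (p - 1) * y) ^ (p / (p - 1)) = x ^ p * y ^ (p / (p - 1)) := by
  rw [mul_rpow (rpow_nonneg hx _) hy, ← rpow_mul hx, mul_div_cancel₀ _ (sub_pos.2 hp).ne']

section

variable {p u : ℝ} (hp : 2 < p) (hu0 : 0 < u) (hu1 : u < 1)
include hp hu0 hu1

theorem one_sub_rpow_mul_lt_one_add_rpow_mul :
    (1 - u) ^ (p - 1) * (1 + u ^ (p - 1)) < (1 + u) ^ (p - 1) * (1 - u ^ (p - 1)) := by
  have hw : 0 < 1 - u := by linarith
  have hm : u ^ (p - 1) < u := by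
    simpa using rpow_lt_rpow_of_exponent_gt hu0 hu1 (show (1:ℝ) < p - 1 by linarith)
  have hm1 : u ^ (p - 1) < 1 := hm.trans hu1
  have hsplit : ∀ x : ℝ, 0 < x → x ^ (p - 1) = x ^ (p - 2) * x := fun x hx => by
    rw [← rpow_add_one hx.ne']; ring_nf
  calc (1 - u) ^ (p - 1) * (1 + u ^ (p - 1))
      = (1 - u) ^ (p - 2) * ((1 - u) * (1 + u ^ (p - 1))) := by rw [hsplit (1 - u) hw]; ring
    _ < (1 - u) ^ (p - 2) * ((1 + u) * (1 - u ^ (p - 1))) :=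
        mul_lt_mul_of_pos_left (by nlinarith) (rpow_pos_of_pos hw _)
    _ ≤ (1 + u) ^ (p - 2) * ((1 + u) * (1 - u ^ (p - 1))) :=
        mul_le_mul_of_nonneg_right (rpow_le_rpow hw.le (by linarith) (by linarith))
          (by nlinarith)
    _ = (1 + u) ^ (p - 1) * (1 - u ^ (p - 1)) := by rw [hsplit (1 + u) (by linarith)]; ring

theorem f_denominator_pos :
    0 < (1 + u) ^ p * (1 - u ^ (p - 1)) ^ (p / (p - 1)) -
      (1 - u) ^ p * (1 + u ^ (p - 1)) ^ (p / (p - 1)) := by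
  have hm : u ^ (p - 1) < 1 := rpow_lt_one hu0.le hu1 (by linarith)
  rw [sub_pos, ← rpow_sub_one_mul_rpow_div_sub_one (x := 1 - u) (by linarith) (by positivity)
    (by linarith), ← rpow_sub_one_mul_rpow_div_sub_one (x := 1 + u) (by linarith)
    (by linarith) (by linarith)]
  exact rpow_lt_rpow (by positivity) (one_sub_rpow_mul_lt_one_add_rpow_mul hp hu0 hu1)
    (div_pos (by linarith) (by linarith))

end

theorem stmt_12 (p : ℝ) (hp : 2 < p) (u : ℝ) (hu : u ∈ Set.Ioo (0:ℝ) 1)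
    (a α : ℝ) (ha : 0 < a) (hα : 0 < α) :
    (1 + u) ^ (p - 1) * (1 - u ^ (p - 1)) / (a + α * (1 + u) ^ p / (1 + u ^ p)) ^ (1 - 1 / p) >
        (1 - u) ^ (p - 1) * (1 + u ^ (p - 1)) / (a + α * (1 - u) ^ p / (1 + u ^ p)) ^ (1 - 1 / p)
      ↔ a > α * f p u := by
  obtain ⟨hu0, hu1⟩ := hu
  have hw : 0 < 1 - u := by linarith
  have hm : u ^ (p - 1) < 1 := rpow_lt_one hu0.le hu1 (by linarith)
  have hX : 0 < a + α * (1 + u) ^ p / (1 + u ^ p) := by positivity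
  have hY : 0 < a + α * (1 - u) ^ p / (1 + u ^ p) := by
    have := rpow_pos_of_pos hw p
    positivity
  have hinv : (1 - 1 / p)⁻¹ = p / (p - 1) := by field_simp
  have hsq : (1 - u ^ (2:ℝ)) ^ p = (1 + u) ^ p * (1 - u) ^ p := by
    rw [← mul_rpow (by linarith) hw.le, rpow_two]; ring_nf
  rw [gt_iff_lt, gt_iff_lt, div_lt_div_iff₀ (rpow_pos_of_pos hY _) (rpow_pos_of_pos hX _),
    mul_rpow_lt_mul_rpow_iff (by positivity) (by positivity) hX.le hY.le
      (by rw [sub_pos, div_lt_one] <;> linarith),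
    hinv, rpow_sub_one_mul_rpow_div_sub_one hw.le (by positivity) (by linarith),
    rpow_sub_one_mul_rpow_div_sub_one (by linarith) (by linarith) (by linarith),
    f, hsq, ← mul_div_assoc, div_lt_iff₀ (f_denominator_pos hp hu0 hu1), ← sub_pos]
  -- both sides now read `0 < ·` of the same polynomial in `a`, `α` and the powers
  conv_rhs => rw [← sub_pos]
  ring_nf
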